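/- arXiv:2503.24299 — 3 statements merged into one kernel-verified Lean document; each statement's English description precedes it below -/
import Mathlib

section
/- Every finite directed graph D whose edges are labelled either 'positive' or 'negative', such that no cycle of D contains a negative edge, admits a stratification: a function σ from vertices to natural numbers such that for every nonempty path from z to z', σ(z) ≥ σ(z'), and if the path contains a negative edge then σ(z) > σ(z'). -/
/-- There is a (nonempty) path from `z` to `z'` containing a negative edge. -/
def NegPath {X : Type*} (E Eneg : X → X → Prop) (z z' : X) : Prop :=
  ∃ a b, Relation.ReflTransGen E z a ∧ Eneg a b ∧ Relation.ReflTransGen E b z'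

/-!
Rank each vertex `z` by the number of vertices reachable from `z` by a path through a negative
edge. Prepending a path to such a path gives another one, so the rank does not increase along
edges. Along a path `z ⟶ z'` through a negative edge the rank drops strictly: the vertices
counted for `z'` are counted for `z`, and `z'` itself is counted for `z` but not for `z'`, since
that would be a cycle through a negative edge.
-/

namespace NegPath

variable {X : Type*} {E Eneg : X → X → Prop}

theorem head {z z' b : X} (hzz' : Relation.ReflTransGen E z z') (h : NegPath E Eneg z' b) :
    NegPath E Eneg z b :=
  let ⟨a, c, hza, hac, hcb⟩ := h
  ⟨a, c, hzz'.trans hza, hac, hcb⟩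

theorem reflTransGen (hsub : ∀ a b, Eneg a b → E a b) {z z' : X} (h : NegPath E Eneg z z') :
    Relation.ReflTransGen E z z' :=
  let ⟨a, c, hza, hac, hcz'⟩ := h
  (hza.tail (hsub a c hac)).trans hcz'

end NegPath

section NegReach

variable {X : Type*} [Fintype X] (E Eneg : X → X → Prop)

noncomputable def negReach (z : X) : Finset X :=
  open Classical in Finset.univ.filter (NegPath E Eneg z)

variable {E Eneg}

theorem mem_negReach {z b : X} : b ∈ negReach E Eneg z ↔ NegPath E Eneg z b := by
  simp [negReach]

theorem negReach_subset_of_reflTransGen {z z' : X} (h : Relation.ReflTransGen E z z') :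
    negReach E Eneg z' ⊆ negReach E Eneg z := fun _ hb =>
  mem_negReach.2 (NegPath.head h (mem_negReach.1 hb))

theorem negReach_ssubset_of_negPath (hsub : ∀ a b, Eneg a b → E a b)
    {z z' : X} (hz' : ¬ NegPath E Eneg z' z') (h : NegPath E Eneg z z') :
    negReach E Eneg z' ⊂ negReach E Eneg z :=
  Finset.ssubset_iff_subset_ne.2
    ⟨negReach_subset_of_reflTransGen (h.reflTransGen hsub), fun heq =>
      hz' (mem_negReach.1 (heq ▸ mem_negReach.2 h))⟩

end NegReach

/-- Every finite directed graph whose edges are labelled positive or negative,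
such that no cycle contains a negative edge, admits a stratification. -/
theorem exists_stratification {X : Type*} [Fintype X]
    (E Eneg : X → X → Prop) (hsub : ∀ a b, Eneg a b → E a b)
    (hstrat : ∀ z : X, ¬ NegPath E Eneg z z) :
    ∃ σ : X → ℕ,
      (∀ z z', Relation.TransGen E z z' → σ z' ≤ σ z) ∧
      (∀ z z', NegPath E Eneg z z' → σ z' < σ z) :=
  ⟨fun z => (negReach E Eneg z).card,
    fun _ _ h => Finset.card_le_card (negReach_subset_of_reflTransGen h.to_reflTransGen),
    fun _ z' h => Finset.card_lt_card (negReach_ssubset_of_negPath hsub (hstrat z') h)⟩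
end

section
/- The refinement iteration terminates in at most |N| · |L| steps: starting from τ₀ = N × L and repeatedly removing a single element (n,z) with ¬check (n,z) τ, one reaches a correct typing after at most |N| · |L| removals, and if check is monotone, the resulting correct typing is independent of the order of removals and equals the maximal correct typing. -/
/-! Every step erases one element of `N × L`, so a run from `N × L` has at most `|N| · |L|`
steps. Under monotone `check`, a correct typing `σ ⊆ τ` survives every step from `τ`: for
`p ∈ σ` we have `check p σ`, hence `check p τ`, so `p` is not the element removed. Thus every
correct typing lies inside every reachable `τ`, and a correct reachable `τ` is the largest one. -/

/-- One refinement step: remove a single pair that fails `check` under the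
current typing. -/
def Step {N L : Type*} [DecidableEq N] [DecidableEq L]
    (check : N × L → Set (N × L) → Prop) (τ τ' : Finset (N × L)) : Prop :=
  ∃ p ∈ τ, ¬ check p ↑τ ∧ τ' = τ.erase p

namespace Step

variable {N L : Type*} [DecidableEq N] [DecidableEq L] {check : N × L → Set (N × L) → Prop}

theorem card_add_one {τ τ' : Finset (N × L)} (h : Step check τ τ') : τ'.card + 1 = τ.card := by
  obtain ⟨p, hp, -, rfl⟩ := h
  exact Finset.card_erase_add_one hp

theorem add_card_eq_of_chain (f : ℕ → Finset (N × L)) {k : ℕ}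
    (hstep : ∀ i < k, Step check (f i) (f (i + 1))) : k + (f k).card = (f 0).card := by
  induction k with
  | zero => simp
  | succ k ih =>
    have hlast := (hstep k k.lt_succ_self).card_add_one
    have hprefix := ih fun i hi => hstep i (hi.trans k.lt_succ_self)
    omega

theorem subset_of_correct {τ τ' : Finset (N × L)} (hmono : ∀ p, Monotone (check p))
    {σ : Set (N × L)} (hσ : ∀ p ∈ σ, check p σ) (hστ : σ ⊆ τ) (h : Step check τ τ') :
    σ ⊆ τ' := by
  obtain ⟨p, -, hfail, rfl⟩ := h
  intro q hq
  rw [Finset.coe_erase]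
  refine ⟨hστ hq, ?_⟩
  rintro rfl
  exact hfail (hmono q hστ (hσ q hq))

theorem subset_of_reflTransGen {τ τ' : Finset (N × L)} (hmono : ∀ p, Monotone (check p))
    {σ : Set (N × L)} (hσ : ∀ p ∈ σ, check p σ) (hστ : σ ⊆ τ)
    (h : Relation.ReflTransGen (Step check) τ τ') : σ ⊆ τ' := by
  induction h with
  | refl => exact hστ
  | tail _ hlast ih => exact hlast.subset_of_correct hmono hσ ih

end Step

/-- The refinement iteration from the full typing terminates after at most
`|N| · |L|` removals, and with monotone `check`, any correct typing reached
from the full typing by such removals equals the maximal correct typing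
(the union of all correct typings), independently of the removal order. -/
theorem refinement_terminates_and_confluent {N L : Type*}
    [Fintype N] [Fintype L] [DecidableEq N] [DecidableEq L]
    (check : N × L → Set (N × L) → Prop)
    (hmono : ∀ p (σ σ' : Set (N × L)), σ ⊆ σ' → check p σ → check p σ') :
    (∀ (f : ℕ → Finset (N × L)) (k : ℕ), f 0 = Finset.univ →
      (∀ i < k, Step check (f i) (f (i + 1))) →
      k ≤ Fintype.card N * Fintype.card L) ∧
    (∀ τ : Finset (N × L),
      Relation.ReflTransGen (Step check) Finset.univ τ →
      (∀ p ∈ τ, check p ↑τ) →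
      (↑τ : Set (N × L)) = ⋃₀ {σ : Set (N × L) | ∀ p ∈ σ, check p σ}) := by
  refine ⟨fun f k h0 hstep => ?_, fun τ hreach hcorrect => ?_⟩
  · have hchain := Step.add_card_eq_of_chain f hstep
    rw [h0, Finset.card_univ, Fintype.card_prod] at hchain
    omega
  · refine (Set.subset_sUnion_of_mem (by exact hcorrect)).antisymm
      (Set.sUnion_subset fun σ hσ => ?_)
    exact Step.subset_of_reflTransGen (fun p _ _ => hmono p _ _) hσ
      (fun q _ => Finset.mem_univ q) hreach
end

section
/- Stratified greatest-fixed-point computation is well-defined: let L be partitioned into strata L₁,…,L_k and suppose check (n,z) τ for z ∈ L_i depends only on τ restricted to L₁ ∪ … ∪ L_i, and is monotone on that restriction when the part on L₁ ∪ … ∪ L_{i-1} is held fixed. Then the typings τ_i defined by τ₁ = union of all correct typings over L₁, and τ_{i+1} = union of all correct typings over L₁ ∪ … ∪ L_{i+1} whose restriction to L₁ ∪ … ∪ L_i equals τ_i, satisfy: each τ_i is itself a correct typing over L₁ ∪ … ∪ L_i. -/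
/-!
All typings in the union defining `tauSeq k` agree below stratum `k` (with `tauSeq (k - 1)`,
or with `∅` when `k = 0`), hence so does the union. A pair of the union on a lower stratum is
then checked against the same restriction as in its own typing (locality), and a pair on
stratum `k` is checked against a typing that only grows on stratum `k` (monotonicity).
-/

/-- A typing is correct if every node–label pair it contains is validated by
`check` relative to the typing itself. -/
def Correct {N L : Type*} (check : N × L → Set (N × L) → Prop)
    (τ : Set (N × L)) : Prop :=
  ∀ p ∈ τ, check p τ

/-- Restriction of a typing to labels on stratum at most `i`. -/
def restLe {N L : Type*} (lab : L → ℕ) (τ : Set (N × L)) (i : ℕ) : Set (N × L) :=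
  {p ∈ τ | lab p.2 ≤ i}

/-- Restriction of a typing to labels on stratum strictly below `i`. -/
def restLt {N L : Type*} (lab : L → ℕ) (τ : Set (N × L)) (i : ℕ) : Set (N × L) :=
  {p ∈ τ | lab p.2 < i}

/-- Restriction of a typing to labels on stratum exactly `i`. -/
def restEq {N L : Type*} (lab : L → ℕ) (τ : Set (N × L)) (i : ℕ) : Set (N × L) :=
  {p ∈ τ | lab p.2 = i}

/-- The stratified sequence of typings: `tauSeq 0` is the union of all correct
typings over the first stratum, and `tauSeq (i+1)` is the union of all correct
typings over the strata up to `i+1` whose restriction to strata up to `i`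
equals `tauSeq i`. -/
def tauSeq {N L : Type*} (check : N × L → Set (N × L) → Prop) (lab : L → ℕ) :
    ℕ → Set (N × L)
  | 0 => ⋃₀ {τ | (∀ p ∈ τ, lab p.2 ≤ 0) ∧ Correct check τ}
  | i + 1 => ⋃₀ {τ | (∀ p ∈ τ, lab p.2 ≤ i + 1) ∧ Correct check τ ∧
      restLe lab τ i = tauSeq check lab i}

section Restriction

variable {N L : Type*} (lab : L → ℕ) (τ : Set (N × L))

theorem restLt_zero : restLt lab τ 0 = ∅ := by
  simp [restLt]

theorem restLt_succ (i : ℕ) : restLt lab τ (i + 1) = restLe lab τ i := by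
  simp [restLt, restLe]

theorem restLe_restLt_of_lt {j k : ℕ} (hjk : j < k) :
    restLe lab (restLt lab τ k) j = restLe lab τ j := by
  ext p
  simp only [restLe, restLt, Set.mem_ofPred_eq]
  constructor
  · exact fun ⟨⟨hp, _⟩, hj⟩ => ⟨hp, hj⟩
  · exact fun ⟨hp, hj⟩ => ⟨⟨hp, hj.trans_lt hjk⟩, hj⟩

theorem restLt_sUnion_of_forall_eq {S : Set (Set (N × L))} (hS : S.Nonempty) {k : ℕ}
    {σ : Set (N × L)} (hσ : ∀ τ ∈ S, restLt lab τ k = σ) : restLt lab (⋃₀ S) k = σ := by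
  obtain ⟨τ₀, hτ₀⟩ := hS
  ext p
  constructor
  · rintro ⟨⟨τ, hτ, hp⟩, hk⟩
    exact hσ τ hτ ▸ ⟨hp, hk⟩
  · intro hp
    obtain ⟨hpτ₀, hk⟩ : p ∈ restLt lab τ₀ k := (hσ τ₀ hτ₀).symm ▸ hp
    exact ⟨⟨τ₀, hτ₀, hpτ₀⟩, hk⟩

theorem restEq_mono {τ τ' : Set (N × L)} (h : τ ⊆ τ') (k : ℕ) :
    restEq lab τ k ⊆ restEq lab τ' k :=
  fun _ ⟨hp, hk⟩ => ⟨h hp, hk⟩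

end Restriction

theorem correct_sUnion_of_restLt_eq {N L : Type*} {check : N × L → Set (N × L) → Prop}
    {lab : L → ℕ}
    (hloc : ∀ (p : N × L) (τ τ' : Set (N × L)),
      restLe lab τ (lab p.2) = restLe lab τ' (lab p.2) → (check p τ ↔ check p τ'))
    (hmono : ∀ (p : N × L) (τ τ' : Set (N × L)),
      restLt lab τ (lab p.2) = restLt lab τ' (lab p.2) →
      restEq lab τ (lab p.2) ⊆ restEq lab τ' (lab p.2) →
      check p τ → check p τ')
    {S : Set (Set (N × L))} {k : ℕ} {σ : Set (N × L)}
    (hS : ∀ τ ∈ S, (∀ p ∈ τ, lab p.2 ≤ k) ∧ Correct check τ ∧ restLt lab τ k = σ) :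
    Correct check (⋃₀ S) := by
  rintro p ⟨τ, hτS, hpτ⟩
  obtain ⟨hbound, hcorrect, hagree⟩ := hS τ hτS
  have hunion : restLt lab (⋃₀ S) k = restLt lab τ k :=
    (restLt_sUnion_of_forall_eq lab ⟨τ, hτS⟩ fun τ' hτ' => (hS τ' hτ').2.2).trans hagree.symm
  rcases (hbound p hpτ).lt_or_eq with hlt | heq
  · refine (hloc p τ _ ?_).mp (hcorrect p hpτ)
    rw [← restLe_restLt_of_lt lab τ hlt, ← restLe_restLt_of_lt lab (⋃₀ S) hlt, hunion]
  · refine hmono p τ _ ?_ ?_ (hcorrect p hpτ)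
    · rw [heq, hunion]
    · exact restEq_mono lab (Set.subset_sUnion_of_mem hτS) _

theorem tauSeq_correct_general {N L : Type*}
    (check : N × L → Set (N × L) → Prop) (lab : L → ℕ)
    (hloc : ∀ (p : N × L) (τ τ' : Set (N × L)),
      restLe lab τ (lab p.2) = restLe lab τ' (lab p.2) → (check p τ ↔ check p τ'))
    (hmono : ∀ (p : N × L) (τ τ' : Set (N × L)),
      restLt lab τ (lab p.2) = restLt lab τ' (lab p.2) →
      restEq lab τ (lab p.2) ⊆ restEq lab τ' (lab p.2) →
      check p τ → check p τ') :
    ∀ i : ℕ, (∀ p ∈ tauSeq check lab i, lab p.2 ≤ i) ∧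
      Correct check (tauSeq check lab i) := by
  rintro (_ | i)
  · refine ⟨fun p ⟨τ, hτ, hp⟩ => hτ.1 p hp, ?_⟩
    exact correct_sUnion_of_restLt_eq hloc hmono fun τ hτ => ⟨hτ.1, hτ.2, restLt_zero lab τ⟩
  · refine ⟨fun p ⟨τ, hτ, hp⟩ => hτ.1 p hp, ?_⟩
    exact correct_sUnion_of_restLt_eq hloc hmono fun τ hτ =>
      ⟨hτ.1, hτ.2.1, (restLt_succ lab τ i).trans hτ.2.2⟩

/-- Stratified greatest-fixed-point computation is well-defined: under locality
and stratified monotonicity of `check`, each `tauSeq i` is a correct typing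
over the strata up to `i`. -/
theorem tauSeq_correct {N L : Type*} [Fintype N] [Fintype L]
    (check : N × L → Set (N × L) → Prop) (lab : L → ℕ)
    (hloc : ∀ (p : N × L) (τ τ' : Set (N × L)),
      restLe lab τ (lab p.2) = restLe lab τ' (lab p.2) → (check p τ ↔ check p τ'))
    (hmono : ∀ (p : N × L) (τ τ' : Set (N × L)),
      restLt lab τ (lab p.2) = restLt lab τ' (lab p.2) →
      restEq lab τ (lab p.2) ⊆ restEq lab τ' (lab p.2) →
      check p τ → check p τ') :
    ∀ i : ℕ, (∀ p ∈ tauSeq check lab i, lab p.2 ≤ i) ∧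
      Correct check (tauSeq check lab i) :=
  tauSeq_correct_general check lab hloc hmono
end
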